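/- In the weak commutativity group χ(G), the subgroup R is generated by L₁₂ together with the elements [g⁻¹·g^φ, a, b^φ] for g, a, b ∈ G; that is, R equals the join of L₁₂ and the subgroup generated by {[g⁻¹·g^φ, a, b^φ] : g, a, b ∈ G} (equivalently, R/L₁₂ is generated by the images of these commutators). -/

import Mathlib

open Subgroup
open scoped commutatorElement

/-- The weak commutativity relations inside the free product `G ∗ G`. -/
def chiRel (G : Type*) [Group G] : Subgroup (Monoid.Coprod G G) :=
  Subgroup.normalClosure
    {x | ∃ g : G, x = Monoid.Coprod.inl g * Monoid.Coprod.inr g *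
      (Monoid.Coprod.inl g)⁻¹ * (Monoid.Coprod.inr g)⁻¹}

instance chiRel_normal (G : Type*) [Group G] : (chiRel G).Normal :=
  Subgroup.normalClosure_normal

/-- The weak commutativity group `χ(G)`. -/
def Chi (G : Type*) [Group G] : Type _ := Monoid.Coprod G G ⧸ chiRel G

instance (G : Type*) [Group G] : Group (Chi G) :=
  inferInstanceAs (Group (Monoid.Coprod G G ⧸ chiRel G))

/-- The canonical map `G → χ(G)`, `g ↦ g`. -/
def chiIota1 (G : Type*) [Group G] : G →* Chi G :=
  (QuotientGroup.mk' (chiRel G)).comp Monoid.Coprod.inl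

/-- The canonical map `G → χ(G)`, `g ↦ g^φ`. -/
def chiIota2 (G : Type*) [Group G] : G →* Chi G :=
  (QuotientGroup.mk' (chiRel G)).comp Monoid.Coprod.inr

/-- `G₁ ≤ χ(G)`. -/
def chiG1 (G : Type*) [Group G] : Subgroup (Chi G) := (chiIota1 G).range

/-- `G₂ = G^φ ≤ χ(G)`. -/
def chiG2 (G : Type*) [Group G] : Subgroup (Chi G) := (chiIota2 G).range

/-- `L = ⟨g⁻¹ g^φ : g ∈ G⟩`. -/
def chiL (G : Type*) [Group G] : Subgroup (Chi G) :=
  Subgroup.closure {x | ∃ g : G, x = (chiIota1 G g)⁻¹ * chiIota2 G g}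

/-- `D = ⁅G₁, G₂⁆`. -/
def chiD (G : Type*) [Group G] : Subgroup (Chi G) := ⁅chiG1 G, chiG2 G⁆

/-- `L₁ = ⁅L, G₁⁆`. -/
def chiL1 (G : Type*) [Group G] : Subgroup (Chi G) := ⁅chiL G, chiG1 G⁆

/-- `L₂ = ⁅L, G₂⁆`. -/
def chiL2 (G : Type*) [Group G] : Subgroup (Chi G) := ⁅chiL G, chiG2 G⁆

/-- `R = ⁅⁅G₁, L⁆, G₂⁆`. -/
def chiR (G : Type*) [Group G] : Subgroup (Chi G) := ⁅⁅chiG1 G, chiL G⁆, chiG2 G⁆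

/-- `L₁₂ = ⁅L₁, L₂⁆`. -/
def chiL12 (G : Type*) [Group G] : Subgroup (Chi G) := ⁅chiL1 G, chiL2 G⁆

/-!
Sidki's identity `⁅g, h^φ⁆ = ⁅g^φ, h⁆` shows that `D = ⁅G₁, G₂⁆` centralises `L`. Since `G₁` and
`G₂` commute modulo `D` and generate `χ(G)`, `G₁` is normal modulo `D`, so `R ≤ D` and `R` also
centralises `L`. The three subgroup lemma then gives `L₁₂ ≤ R` and `⁅⁅L₁, L⁆, G₂⁆ ≤ L₁₂`.
Finally, as `R` commutes with `L`, the map `w ↦ ⁅⁅w, a⁆, b^φ⁆` on `L` is multiplicative up to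
elements of `⁅⁅L₁, L⁆, G₂⁆`, so `R = ⁅L₁, G₂⁆` is generated modulo `L₁₂` by its values on the
generators `g⁻¹ g^φ` of `L`.
-/

section Commutators

variable {Q : Type*} [Group Q]

theorem commutatorElement_mul_left_of_commute {p q k : Q} (h : Commute p ⁅q, k⁆) :
    ⁅p * q, k⁆ = ⁅q, k⁆ * ⁅p, k⁆ := by
  rw [commutatorElement_mul_left_eq_conj_mul, h.eq, mul_inv_cancel_right]

theorem commutatorElement_inv_left_of_commute {p k : Q} (h : Commute p ⁅p, k⁆) :
    ⁅p⁻¹, k⁆ = ⁅p, k⁆⁻¹ := by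
  rw [commutatorElement_inv_left, ← commutatorElement_inv, mul_assoc, ← h.inv_right.eq,
    inv_mul_cancel_left]

theorem commute_inv_mul_of_conj_eq {u v d : Q} (h : u * d * u⁻¹ = v * d * v⁻¹) :
    Commute d (u⁻¹ * v) :=
  calc d * (u⁻¹ * v) = u⁻¹ * (u * d * u⁻¹) * v := by group
    _ = u⁻¹ * v * d := by rw [h]; group

theorem eq_of_conj_eq_of_conj_conj_eq {a b p q : Q} (hab : Commute a b)
    (h₁ : MulAut.conj a p = MulAut.conj b q)
    (h₂ : MulAut.conj a (MulAut.conj a p) = MulAut.conj b (MulAut.conj b q)) : p = q := by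
  have hq : MulAut.conj a q = MulAut.conj b q := by
    apply (MulAut.conj b).injective
    calc MulAut.conj b (MulAut.conj a q) = MulAut.conj a (MulAut.conj b q) := by
          rw [← MulAut.mul_apply, ← map_mul, ← hab.eq, map_mul, MulAut.mul_apply]
      _ = MulAut.conj a (MulAut.conj a p) := by rw [h₁]
      _ = MulAut.conj b (MulAut.conj b q) := h₂
  exact (MulAut.conj a).injective (h₁.trans hq.symm)

end Commutators

namespace Subgroup

variable {Q : Type*} [Group Q]

theorem commute_of_commutator_eq_bot {H K : Subgroup Q} (h : ⁅H, K⁆ = ⊥) {x y : Q}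
    (hx : x ∈ H) (hy : y ∈ K) : Commute x y :=
  commutatorElement_eq_one_iff_commute.mp <| mem_bot.mp (h ▸ commutator_mem_commutator hx hy)

theorem le_normalizer_of_commutator_eq_bot {H K : Subgroup Q} (h : ⁅H, K⁆ = ⊥) :
    K ≤ normalizer (H : Set Q) :=
  (le_centralizer_iff.mp (commutator_eq_bot_iff_le_centralizer.mp h)).trans
    (centralizer_le_normalizer _)

theorem normal_of_sup_le_normalizer {H A B : Subgroup Q} (htop : A ⊔ B = ⊤)
    (hA : A ≤ normalizer (H : Set Q)) (hB : B ≤ normalizer (H : Set Q)) : H.Normal :=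
  normalizer_eq_top_iff.mp (top_le_iff.mp (htop ▸ sup_le hA hB))

theorem commutator_commutator_le_of_rotate {N H₁ H₂ H₃ : Subgroup Q} [N.Normal]
    (h₁ : ⁅⁅H₂, H₃⁆, H₁⁆ ≤ N) (h₂ : ⁅⁅H₃, H₁⁆, H₂⁆ ≤ N) : ⁅⁅H₁, H₂⁆, H₃⁆ ≤ N := by
  simp only [← QuotientGroup.ker_mk' N, ← map_eq_bot_iff, map_commutator] at h₁ h₂ ⊢
  exact commutator_commutator_eq_bot_of_rotate h₁ h₂

/-- Modulo `N`, `A` is normal: it is normalised by itself and centralised by `B`. -/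
theorem commutator_commutator_le_of_sup_eq_top {N A B : Subgroup Q} [N.Normal]
    (hAB : ⁅A, B⁆ ≤ N) (htop : A ⊔ B = ⊤) (X : Subgroup Q) : ⁅⁅A, X⁆, B⁆ ≤ N := by
  rw [← QuotientGroup.ker_mk' N, ← map_eq_bot_iff] at hAB ⊢
  set π := QuotientGroup.mk' N
  rw [map_commutator] at hAB
  have hA : (A.map π).Normal := by
    refine normal_of_sup_le_normalizer (B := B.map π) ?_ le_normalizer ?_
    · rw [← map_sup, htop, ← MonoidHom.range_eq_map, MonoidHom.range_eq_top]
      exact QuotientGroup.mk'_surjective N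
    · exact le_normalizer_of_commutator_eq_bot hAB
  rw [map_commutator, map_commutator, eq_bot_iff, ← hAB]
  exact commutator_mono (commutator_le_left _ _) le_rfl

theorem commutator_closure_le {S : Set Q} {K N : Subgroup Q}
    (hcomm : ⁅⁅closure S, K⁆, closure S⁆ = ⊥) (hgen : ∀ s ∈ S, ∀ k ∈ K, ⁅s, k⁆ ∈ N) :
    ⁅closure S, K⁆ ≤ N := by
  rw [commutator_le]
  intro h hh k hk
  induction hh using closure_induction with
  | mem s hs => exact hgen s hs k hk
  | one => rw [commutatorElement_one_left]; exact one_mem N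
  | mul x y hx hy ihx ihy =>
    rw [commutatorElement_mul_left_of_commute
      (commute_of_commutator_eq_bot hcomm (commutator_mem_commutator hy hk) hx).symm]
    exact mul_mem ihy ihx
  | inv x hx ih =>
    rw [commutatorElement_inv_left_of_commute
      (commute_of_commutator_eq_bot hcomm (commutator_mem_commutator hx hk) hx).symm]
    exact inv_mem ih

theorem commutator_commutator_closure_le {S : Set Q} {A B N : Subgroup Q}
    (hA : ⁅closure S, A⁆ ≤ closure S) (hcomm : ⁅⁅⁅closure S, A⁆, B⁆, closure S⁆ = ⊥)
    (hN : ⁅⁅⁅closure S, A⁆, closure S⁆, B⁆ ≤ N)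
    (hgen : ∀ s ∈ S, ∀ a ∈ A, ∀ b ∈ B, ⁅⁅s, a⁆, b⁆ ∈ N) : ⁅⁅closure S, A⁆, B⁆ ≤ N := by
  set H := closure S
  refine commutator_closure_le (eq_bot_iff.mpr ((commutator_mono le_rfl hA).trans hcomm.le)) ?_
  rintro _ ⟨h, hh, a, ha, rfl⟩ b hb
  have hHA {x : Q} (hx : x ∈ H) : ⁅x, a⁆ ∈ ⁅H, A⁆ := commutator_mem_commutator hx ha
  have hcomm' {x y : Q} (hx : x ∈ ⁅H, A⁆) (hy : y ∈ H) : Commute y ⁅x, b⁆ :=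
    (commute_of_commutator_eq_bot hcomm (commutator_mem_commutator hx hb) hy).symm
  have hN' {x z : Q} (hx : x ∈ H) (hz : z ∈ ⁅H, A⁆) : ⁅⁅x, z⁆, b⁆ ∈ N :=
    hN (commutator_mem_commutator (commutator_comm H _ ▸ commutator_mem_commutator hx hz) hb)
  have hHH {x z : Q} (hx : x ∈ H) (hz : z ∈ ⁅H, A⁆) : ⁅x, z⁆ ∈ H :=
    commutator_le_self H (commutator_mem_commutator hx (hA hz))
  induction hh using closure_induction with
  | mem s hs => exact hgen s hs a ha b hb
  | one => rw [commutatorElement_one_left, commutatorElement_one_left]; exact one_mem N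
  | mul x y hx hy ihx ihy =>
    have e : ⁅x * y, a⁆ = ⁅x, ⁅y, a⁆⁆ * ⁅y, a⁆ * ⁅x, a⁆ := by
      simp only [commutatorElement_def]; group
    rw [e, commutatorElement_mul_left_of_commute
        (hcomm' (hHA hx) (mul_mem (hHH hx (hHA hy)) (hA (hHA hy)))),
      commutatorElement_mul_left_of_commute (hcomm' (hHA hy) (hHH hx (hHA hy)))]
    exact mul_mem ihx (mul_mem ihy (hN' hx (hHA hy)))
  | inv x hx ih =>
    have e : ⁅x⁻¹, a⁆ = ⁅x⁻¹, ⁅x, a⁆⁻¹⁆ * ⁅x, a⁆⁻¹ := by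
      simp only [commutatorElement_def]; group
    have hinv : ⁅x, a⁆⁻¹ ∈ ⁅H, A⁆ := inv_mem (hHA hx)
    rw [e, commutatorElement_mul_left_of_commute (hcomm' hinv (hHH (inv_mem hx) hinv)),
      commutatorElement_inv_left_of_commute (hcomm' (hHA hx) (hA (hHA hx)))]
    exact mul_mem (inv_mem ih) (hN' (inv_mem hx) hinv)

end Subgroup

section WeakCommutativity

variable {G : Type*} [Group G]

theorem commute_chiIota1_chiIota2 (g : G) : Commute (chiIota1 G g) (chiIota2 G g) := by
  have h : QuotientGroup.mk' (chiRel G) ⁅Monoid.Coprod.inl g, Monoid.Coprod.inr g⁆ = 1 :=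
    (QuotientGroup.eq_one_iff _).mpr (subset_normalClosure ⟨g, commutatorElement_def _ _⟩)
  rw [map_commutatorElement] at h
  exact commutatorElement_eq_one_iff_commute.mp h

theorem chiG1_sup_chiG2 : chiG1 G ⊔ chiG2 G = ⊤ :=
  (Monoid.Coprod.range_eq (QuotientGroup.mk' (chiRel G))).symm.trans
    (MonoidHom.range_eq_top.mpr (QuotientGroup.mk'_surjective _))

theorem chiG1_sup_chiL : chiG1 G ⊔ chiL G = ⊤ := by
  refine top_le_iff.mp (chiG1_sup_chiG2 (G := G) ▸ sup_le le_sup_left ?_)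
  rintro _ ⟨g, rfl⟩
  rw [← mul_inv_cancel_left (chiIota1 G g) (chiIota2 G g)]
  exact mul_mem_sup ⟨g, rfl⟩ (subset_closure ⟨g, rfl⟩)

theorem chiG2_sup_chiL : chiG2 G ⊔ chiL G = ⊤ := by
  refine top_le_iff.mp (chiG1_sup_chiG2 (G := G) ▸ sup_le ?_ le_sup_left)
  rintro _ ⟨g, rfl⟩
  have e : chiIota1 G g = chiIota2 G g * ((chiIota1 G g)⁻¹ * chiIota2 G g)⁻¹ := by group
  rw [e]
  exact mul_mem_sup ⟨g, rfl⟩ (inv_mem (subset_closure ⟨g, rfl⟩))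

theorem conj_commutatorElement_chiIota_eq (x y : G) :
    MulAut.conj (chiIota1 G x) ⁅chiIota1 G y, chiIota2 G x⁆ =
      MulAut.conj (chiIota2 G x) ⁅chiIota2 G y, chiIota1 G x⁆ := by
  have hxy := (commute_chiIota1_chiIota2 (x * y)).commutator_eq
  rw [map_mul, map_mul, commutatorElement_mul_left_eq_conj_mul,
    commutatorElement_mul_right_eq_mul_conj, commutatorElement_mul_right_eq_mul_conj,
    (commute_chiIota1_chiIota2 x).commutator_eq,
    (commute_chiIota1_chiIota2 y).commutator_eq] at hxy
  simp only [mul_one, one_mul, mul_inv_cancel_right] at hxy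
  rw [MulAut.conj_apply, MulAut.conj_apply, eq_inv_of_mul_eq_one_left hxy,
    ← commutatorElement_inv (chiIota1 G x)]
  group

theorem commutatorElement_chiIota1_chiIota2_eq (x y : G) :
    ⁅chiIota1 G x, chiIota2 G y⁆ = ⁅chiIota2 G x, chiIota1 G y⁆ := by
  refine eq_of_conj_eq_of_conj_conj_eq (commute_chiIota1_chiIota2 y)
    (conj_commutatorElement_chiIota_eq y x) ?_
  have h := conj_commutatorElement_chiIota_eq y (y * x)
  rw [map_mul, map_mul, commutatorElement_mul_left_eq_conj_mul,
    commutatorElement_mul_left_eq_conj_mul, (commute_chiIota1_chiIota2 y).commutator_eq,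
    (commute_chiIota1_chiIota2 y).symm.commutator_eq, mul_one, mul_one, ← MulAut.conj_apply,
    ← MulAut.conj_apply] at h
  exact h

theorem commute_commutatorElement_chiIota1_chiIota2 (g y x : G) :
    Commute ⁅chiIota1 G g, chiIota2 G y⁆ ((chiIota1 G x)⁻¹ * chiIota2 G x) := by
  have h := commutatorElement_chiIota1_chiIota2_eq (x * g) y
  rw [map_mul, map_mul, commutatorElement_mul_left_eq_conj_mul,
    commutatorElement_mul_left_eq_conj_mul, ← commutatorElement_chiIota1_chiIota2_eq g y,
    ← commutatorElement_chiIota1_chiIota2_eq x y] at h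
  exact commute_inv_mul_of_conj_eq (mul_right_cancel h)

theorem commutator_chiD_chiL : ⁅chiD G, chiL G⁆ = ⊥ := by
  rw [commutator_eq_bot_iff_le_centralizer, chiL, centralizer_closure, chiD,
    Subgroup.commutator_def, closure_le]
  rintro _ ⟨_, ⟨g, rfl⟩, _, ⟨y, rfl⟩, rfl⟩ _ ⟨x, rfl⟩
  exact (commute_commutatorElement_chiIota1_chiIota2 g y x).symm.eq

instance chiL_normal : (chiL G).Normal := by
  refine normal_of_sup_le_normalizer chiG1_sup_chiL ?_ le_normalizer
  rw [chiL, le_normalizer_closure_iff]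
  rintro _ ⟨c, rfl⟩ _ ⟨g, rfl⟩
  have e : chiIota1 G c * ((chiIota1 G g)⁻¹ * chiIota2 G g) * (chiIota1 G c)⁻¹ =
      ((chiIota1 G (g * c⁻¹))⁻¹ * chiIota2 G (g * c⁻¹)) *
        ((chiIota1 G c⁻¹)⁻¹ * chiIota2 G c⁻¹)⁻¹ := by
    simp only [map_mul, map_inv]; group
  rw [e]
  exact mul_mem (subset_closure ⟨_, rfl⟩) (inv_mem (subset_closure ⟨_, rfl⟩))

instance chiD_normal : (chiD G).Normal :=
  normal_of_sup_le_normalizer chiG1_sup_chiG2 (normalizer_commutator_ge_left _ _)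
    (normalizer_commutator_ge_right _ _)

instance chiL1_normal : (chiL1 G).Normal :=
  normal_of_sup_le_normalizer ((sup_comm _ _).trans chiG1_sup_chiL)
    (normalizer_commutator_ge_left _ _) (normalizer_commutator_ge_right _ _)

instance chiL2_normal : (chiL2 G).Normal :=
  normal_of_sup_le_normalizer ((sup_comm _ _).trans chiG2_sup_chiL)
    (normalizer_commutator_ge_left _ _) (normalizer_commutator_ge_right _ _)

instance chiL12_normal : (chiL12 G).Normal :=
  commutator_normal (chiL1 G) (chiL2 G)

theorem chiR_le_chiD : chiR G ≤ chiD G :=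
  commutator_commutator_le_of_sup_eq_top (N := chiD G) le_rfl chiG1_sup_chiG2 (chiL G)

theorem commutator_chiR_chiL : ⁅chiR G, chiL G⁆ = ⊥ :=
  eq_bot_iff.mpr ((commutator_mono chiR_le_chiD le_rfl).trans commutator_chiD_chiL.le)

theorem chiR_eq_commutator_chiL1 : chiR G = ⁅chiL1 G, chiG2 G⁆ := by
  rw [chiR, chiL1, commutator_comm (chiG1 G)]

instance chiR_normal : (chiR G).Normal := by
  refine normal_of_sup_le_normalizer chiG2_sup_chiL ?_
    (le_normalizer_of_commutator_eq_bot commutator_chiR_chiL)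
  rw [chiR_eq_commutator_chiL1]
  exact normalizer_commutator_ge_right _ _

theorem commutator_chiL2_chiG1_le : ⁅chiL2 G, chiG1 G⁆ ≤ chiR G := by
  refine commutator_commutator_le_of_rotate ?_ le_rfl
  rw [commutator_comm (chiG2 G), ← chiD, commutator_chiD_chiL]
  exact bot_le

theorem chiL12_le_chiR : chiL12 G ≤ chiR G := by
  refine commutator_commutator_le_of_rotate ?_ ?_
  · rw [eq_bot_iff.mpr ((commutator_mono (commutator_comm_le _ _ |>.trans
      commutator_chiL2_chiG1_le) le_rfl).trans commutator_chiR_chiL.le)]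
    exact bot_le
  · exact (commutator_mono (commutator_le_left _ _) le_rfl).trans commutator_chiL2_chiG1_le

theorem commutator_chiL1_chiL_chiG2_le : ⁅⁅chiL1 G, chiL G⁆, chiG2 G⁆ ≤ chiL12 G := by
  refine commutator_commutator_le_of_rotate (commutator_comm_le _ _) ?_
  rw [commutator_comm (chiG2 G), ← chiR_eq_commutator_chiL1, commutator_chiR_chiL]
  exact bot_le

end WeakCommutativity

theorem chiR_eq_join (G : Type*) [Group G] :
    chiR G = chiL12 G ⊔ Subgroup.closure
      {x : Chi G | ∃ g a b : G,
        x = ⁅⁅(chiIota1 G g)⁻¹ * chiIota2 G g, chiIota1 G a⁆, chiIota2 G b⁆} := by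
  rw [chiR_eq_commutator_chiL1]
  apply le_antisymm
  · refine commutator_commutator_closure_le (commutator_le_left (chiL G) (chiG1 G))
      (chiR_eq_commutator_chiL1 (G := G) ▸ commutator_chiR_chiL)
      (commutator_chiL1_chiL_chiG2_le.trans le_sup_left) ?_
    rintro _ ⟨g, rfl⟩ _ ⟨a, rfl⟩ _ ⟨b, rfl⟩
    exact mem_sup_right (subset_closure ⟨g, a, b, rfl⟩)
  · refine sup_le (chiR_eq_commutator_chiL1 (G := G) ▸ chiL12_le_chiR) ((closure_le _).mpr ?_)
    rintro _ ⟨g, a, b, rfl⟩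
    exact commutator_mem_commutator
      (commutator_mem_commutator (subset_closure ⟨g, rfl⟩) ⟨a, rfl⟩) ⟨b, rfl⟩
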